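/- arXiv:1112.0216 — 3 statements merged into one kernel-verified Lean document; each statement's English description precedes it below -/
import Mathlib

section
/- With the relativistic Lagrangian L(q,v) = G(q,v)^{1/(2N)} + Σ_μ A_μ(q) v^μ, for every smooth curve c : ℝ → ℝᵐ with nowhere-vanishing derivative, the Euler–Lagrange expressions ℰ_λ(c)(τ) = (∂L/∂q^λ)(c(τ), c'(τ)) − (d/dτ)[(∂L/∂v^λ)(c(τ), c'(τ))] satisfy the Noether identities Σ_λ c'^λ(τ)·ℰ_λ(c)(τ) = 0 for all τ. -/
open ContDiff

open scoped BigOperators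

/-- Partial derivative of a function `f : ℝᵐ → ℝ` in the `lam`-th coordinate direction. -/
noncomputable def partialDeriv {m : ℕ} (f : (Fin m → ℝ) → ℝ) (lam : Fin m)
    (q : Fin m → ℝ) : ℝ :=
  fderiv ℝ f q (Pi.single lam 1)

/-- `G(q,v) = Σ_{α₁,…,α_{2N}} g_{α₁…α_{2N}}(q) v^{α₁}⋯v^{α_{2N}}`. -/
noncomputable def Gfun (m N : ℕ) (g : (Fin (2 * N) → Fin m) → (Fin m → ℝ) → ℝ)
    (q v : Fin m → ℝ) : ℝ :=
  ∑ α : Fin (2 * N) → Fin m, g α q * ∏ k : Fin (2 * N), v (α k)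

/-- The index tuple `(μ, α₂, …, α_{2N})` built from a head index `μ` and a tail `t`. -/
def tupCons1 (m N : ℕ) (μ : Fin m) (t : Fin (2 * N - 1) → Fin m) :
    Fin (2 * N) → Fin m :=
  fun k => if h : (k : ℕ) = 0 then μ else t ⟨(k : ℕ) - 1, by have := k.isLt; omega⟩

/-- The index tuple `(β, μ, α₃, …, α_{2N})` built from two head indices and a tail `s`. -/
def tupCons2 (m N : ℕ) (β μ : Fin m) (s : Fin (2 * N - 2) → Fin m) :
    Fin (2 * N) → Fin m :=
  fun k =>
    if h0 : (k : ℕ) = 0 then β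
    else if h1 : (k : ℕ) = 1 then μ
    else s ⟨(k : ℕ) - 2, by have := k.isLt; omega⟩

/-- The field strength `F_{λμ} = ∂_λ A_μ − ∂_μ A_λ` of a one-form `A`. -/
noncomputable def Fstr {m : ℕ} (A : Fin m → (Fin m → ℝ) → ℝ) (lam μ : Fin m)
    (q : Fin m → ℝ) : ℝ :=
  partialDeriv (A μ) lam q - partialDeriv (A lam) μ q

/-- The expressions `E_β(c)(τ)` of the relativistic equation. -/
noncomputable def Erel (m N : ℕ) (g : (Fin (2 * N) → Fin m) → (Fin m → ℝ) → ℝ)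
    (A : Fin m → (Fin m → ℝ) → ℝ) (c : ℝ → Fin m → ℝ) (β : Fin m) (τ : ℝ) : ℝ :=
  (∑ μ : Fin m, ∑ t : Fin (2 * N - 1) → Fin m,
      ((1 / (2 * N : ℝ)) * partialDeriv (g (tupCons1 m N μ t)) β (c τ)
          - partialDeriv (g (tupCons1 m N β t)) μ (c τ))
        * deriv c τ μ * ∏ k : Fin (2 * N - 1), deriv c τ (t k))
    - (2 * N - 1 : ℝ) * (∑ μ : Fin m, ∑ s : Fin (2 * N - 2) → Fin m,
        g (tupCons2 m N β μ s) (c τ) * deriv (deriv c) τ μ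
          * ∏ k : Fin (2 * N - 2), deriv c τ (s k))
    + Gfun m N g (c τ) (deriv c τ) ^ (1 - 1 / (2 * N : ℝ))
        * ∑ μ : Fin m, Fstr A β μ (c τ) * deriv c τ μ

/-- The relativistic Lagrangian `L(q,v) = G(q,v)^{1/(2N)} + Σ_μ A_μ(q) v^μ`. -/
noncomputable def Lrel (m N : ℕ) (g : (Fin (2 * N) → Fin m) → (Fin m → ℝ) → ℝ)
    (A : Fin m → (Fin m → ℝ) → ℝ) (q v : Fin m → ℝ) : ℝ :=
  Gfun m N g q v ^ (1 / (2 * N : ℝ)) + ∑ μ : Fin m, A μ q * v μ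

/-- Euler–Lagrange expression `ℰ_λ(c)(τ) = ∂L/∂q^λ(c,c') − d/dτ [∂L/∂v^λ(c,c')]` of a
Lagrangian `L(q,v)` along a curve `c`. -/
noncomputable def eulerLagrange {m : ℕ} (L : (Fin m → ℝ) → (Fin m → ℝ) → ℝ)
    (c : ℝ → Fin m → ℝ) (lam : Fin m) (τ : ℝ) : ℝ :=
  partialDeriv (fun q => L q (deriv c τ)) lam (c τ)
    - deriv (fun s => partialDeriv (fun v => L (c s) v) lam (deriv c s)) τ

/-! A Lagrangian that is positively homogeneous of degree one in the velocity satisfies Euler's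
identity `∂L/∂v(q, v) · v = L(q, v)` for `v ≠ 0`. Differentiating this identity along the lifted
curve `τ ↦ (c τ, c' τ)` and comparing with the chain rule for `τ ↦ L(c τ, c' τ)` gives
`(d/dτ ∂L/∂v) · c' = ∂L/∂q · c'`, i.e. `Σ_λ c'^λ ℰ_λ = 0`. The relativistic Lagrangian is such a
Lagrangian because `G(q, t v) = t^{2N} G(q, v)`. -/

open Function

section Homogeneous

variable {E : Type*} [NormedAddCommGroup E] [NormedSpace ℝ E]

theorem HasFDerivAt.apply_self_eq_of_smul_eq_mul {f : E → ℝ} {f' : E →L[ℝ] ℝ} {v : E}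
    (hf : HasFDerivAt f f' v) (hhom : ∀ t : ℝ, 0 < t → f (t • v) = t * f v) : f' v = f v := by
  have hline : HasDerivAt (fun t : ℝ => t • v) v 1 := by
    simpa using (hasDerivAt_id (1 : ℝ)).smul_const v
  have hdiff : HasDerivAt (fun t : ℝ => f (t • v)) (f' v) 1 := by
    rw [← one_smul ℝ v] at hf
    exact hf.comp_hasDerivAt 1 hline
  have hlin : (fun t : ℝ => f (t • v)) =ᶠ[nhds 1] fun t => t * f v :=
    Filter.eventually_of_mem (lt_mem_nhds one_pos) hhom
  have hscale : HasDerivAt (fun t : ℝ => t * f v) (f v) 1 := by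
    simpa using (hasDerivAt_id (1 : ℝ)).mul_const (f v)
  exact hdiff.unique (hlin.hasDerivAt_iff.mpr hscale)

theorem hasFDerivAt_comp_prodMk_left {F : E × E → ℝ} {q v : E} (hF : DifferentiableAt ℝ F (q, v)) :
    HasFDerivAt (fun q' => F (q', v)) ((fderiv ℝ F (q, v)).comp (.inl ℝ E E)) q :=
  hF.hasFDerivAt.comp q (hasFDerivAt_prodMk_left q v)

theorem hasFDerivAt_comp_prodMk_right {F : E × E → ℝ} {q v : E} (hF : DifferentiableAt ℝ F (q, v)) :
    HasFDerivAt (fun v' => F (q, v')) ((fderiv ℝ F (q, v)).comp (.inr ℝ E E)) v :=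
  hF.hasFDerivAt.comp v (hasFDerivAt_prodMk_right q v)

theorem noether_identity_of_smul_eq_mul {F : E × E → ℝ} {c : ℝ → E} {τ : ℝ}
    {a : E} {Φ' : E × E →L[ℝ] ℝ}
    (hF : ∀ s, DifferentiableAt ℝ F (c s, deriv c s))
    (hhom : ∀ q v, v ≠ 0 → ∀ t : ℝ, 0 < t → F (q, t • v) = t * F (q, v))
    (hc' : ∀ s, deriv c s ≠ 0)
    (hc : DifferentiableAt ℝ c τ) (hc2 : HasDerivAt (deriv c) a τ)
    (hΦ : HasDerivAt (fun s => fderiv ℝ F (c s, deriv c s)) Φ' τ) :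
    Φ' (0, deriv c τ) = fderiv ℝ F (c τ, deriv c τ) (deriv c τ, 0) := by
  have euler : (fun s => fderiv ℝ F (c s, deriv c s) (0, deriv c s)) =
      fun s => F (c s, deriv c s) := by
    funext s
    simpa using (hasFDerivAt_comp_prodMk_right (hF s)).apply_self_eq_of_smul_eq_mul
      (hhom _ _ (hc' s))
  have hlhs := hΦ.clm_apply ((hasDerivAt_const τ (0 : E)).prodMk hc2)
  have hrhs := (hF τ).hasFDerivAt.comp_hasDerivAt τ (hc.hasDerivAt.prodMk hc2)
  rw [euler] at hlhs
  have h := hlhs.unique hrhs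
  have hsplit : ((deriv c τ, a) : E × E) = (deriv c τ, 0) + (0, a) := by simp
  rw [hsplit, map_add] at h
  linarith

end Homogeneous

theorem sum_mul_apply_single {ι : Type*} [Fintype ι] [DecidableEq ι] (f : (ι → ℝ) →L[ℝ] ℝ)
    (v : ι → ℝ) : ∑ i, v i * f (Pi.single i 1) = f v := by
  conv_rhs => rw [pi_eq_sum_univ' v]
  simp [map_sum, map_smul]

section EulerLagrange

variable {m : ℕ} {L : (Fin m → ℝ) → (Fin m → ℝ) → ℝ} {c : ℝ → Fin m → ℝ} {τ : ℝ}

theorem eulerLagrange_eq_fderiv_uncurry (hL : ∀ s, DifferentiableAt ℝ (uncurry L) (c s, deriv c s))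
    (lam : Fin m) : eulerLagrange L c lam τ =
      fderiv ℝ (uncurry L) (c τ, deriv c τ) (Pi.single lam 1, 0)
        - deriv (fun s => fderiv ℝ (uncurry L) (c s, deriv c s) (0, Pi.single lam 1)) τ := by
  have hvel : ∀ s, partialDeriv (fun v => L (c s) v) lam (deriv c s) =
      fderiv ℝ (uncurry L) (c s, deriv c s) (0, Pi.single lam 1) := fun s => by
    have h : HasFDerivAt (fun v => L (c s) v) _ _ := hasFDerivAt_comp_prodMk_right (hL s)
    simp [partialDeriv, h.fderiv]
  have h : HasFDerivAt (fun q => L q (deriv c τ)) _ _ := hasFDerivAt_comp_prodMk_left (hL τ)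
  simp only [eulerLagrange, hvel]
  simp [partialDeriv, h.fderiv]

theorem sum_deriv_mul_eulerLagrange_eq_zero
    (hL : ∀ s, ContDiffAt ℝ 2 (uncurry L) (c s, deriv c s))
    (hhom : ∀ q v, v ≠ 0 → ∀ t : ℝ, 0 < t → L q (t • v) = t * L q v)
    (hc' : ∀ s, deriv c s ≠ 0) (hc : DifferentiableAt ℝ c τ)
    (hc2 : DifferentiableAt ℝ (deriv c) τ) :
    ∑ lam : Fin m, deriv c τ lam * eulerLagrange L c lam τ = 0 := by
  have hL1 : ∀ s, DifferentiableAt ℝ (uncurry L) (c s, deriv c s) :=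
    fun s => (hL s).differentiableAt two_ne_zero
  obtain ⟨Φ', hΦ⟩ : ∃ Φ', HasDerivAt (fun s => fderiv ℝ (uncurry L) (c s, deriv c s)) Φ' τ :=
    ⟨_, (((hL τ).fderiv_right le_rfl).differentiableAt one_ne_zero).hasFDerivAt.comp_hasDerivAt τ
      (hc.hasDerivAt.prodMk hc2.hasDerivAt)⟩
  have noether := noether_identity_of_smul_eq_mul hL1 hhom hc' hc hc2.hasDerivAt hΦ
  have hvel : ∀ lam : Fin m, deriv (fun s => fderiv ℝ (uncurry L) (c s, deriv c s)
      (0, Pi.single lam 1)) τ = Φ' (0, Pi.single lam 1) :=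
    fun lam => (hΦ.clm_apply (hasDerivAt_const τ _)).deriv.trans (by simp)
  simp only [eulerLagrange_eq_fderiv_uncurry hL1, hvel, mul_sub, Finset.sum_sub_distrib]
  have hq_sum := sum_mul_apply_single
    ((fderiv ℝ (uncurry L) (c τ, deriv c τ)).comp (.inl ℝ _ _)) (deriv c τ)
  have hv_sum := sum_mul_apply_single (Φ'.comp (.inr ℝ _ _)) (deriv c τ)
  simp only [ContinuousLinearMap.comp_apply, ContinuousLinearMap.inl_apply,
    ContinuousLinearMap.inr_apply] at hq_sum hv_sum
  rw [hq_sum, hv_sum, noether, sub_self]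

end EulerLagrange

section Relativistic

variable {m N : ℕ} {g : (Fin (2 * N) → Fin m) → (Fin m → ℝ) → ℝ}

theorem contDiff_uncurry_Gfun {n : WithTop ℕ∞} (hg : ∀ α, ContDiff ℝ n (g α)) :
    ContDiff ℝ n (uncurry (Gfun m N g)) :=
  ContDiff.sum fun α _ => ((hg α).comp contDiff_fst).mul
    (contDiff_prod fun k _ => (contDiff_apply ℝ ℝ (α k)).comp contDiff_snd)

theorem Gfun_smul (q v : Fin m → ℝ) (t : ℝ) :
    Gfun m N g q (t • v) = t ^ (2 * N) * Gfun m N g q v := by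
  simp only [Gfun, Finset.mul_sum, Pi.smul_apply, smul_eq_mul, Finset.prod_mul_distrib,
    Finset.prod_const, Finset.card_univ, Fintype.card_fin]
  exact Finset.sum_congr rfl fun _ _ => by ring

variable {A : Fin m → (Fin m → ℝ) → ℝ}

theorem Lrel_smul (hN : N ≠ 0) {q v : Fin m → ℝ} (hG : 0 ≤ Gfun m N g q v) {t : ℝ} (ht : 0 ≤ t) :
    Lrel m N g A q (t • v) = t * Lrel m N g A q v := by
  have hroot : (t ^ (2 * N)) ^ (1 / (2 * N : ℝ)) = t := by
    simpa using Real.pow_rpow_inv_natCast ht (mul_ne_zero two_ne_zero hN)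
  simp only [Lrel, Gfun_smul, Real.mul_rpow (pow_nonneg ht _) hG, hroot, mul_add, Finset.mul_sum,
    Pi.smul_apply, smul_eq_mul]
  congr 1
  exact Finset.sum_congr rfl fun _ _ => by ring

theorem contDiffAt_uncurry_Lrel {n : WithTop ℕ∞} (hg : ∀ α, ContDiff ℝ n (g α))
    (hA : ∀ μ, ContDiff ℝ n (A μ)) {q v : Fin m → ℝ} (hG : Gfun m N g q v ≠ 0) :
    ContDiffAt ℝ n (uncurry (Lrel m N g A)) (q, v) :=
  (((contDiff_uncurry_Gfun hg).contDiffAt (x := (q, v))).rpow_const_of_ne hG).add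
    (ContDiff.sum fun μ _ => ((hA μ).comp contDiff_fst).mul
      ((contDiff_apply ℝ ℝ μ).comp contDiff_snd)).contDiffAt

end Relativistic

theorem noether_identities_relativistic_lagrangian_general
    (m N : ℕ) (hN : 1 ≤ N)
    (g : (Fin (2 * N) → Fin m) → (Fin m → ℝ) → ℝ)
    (hg : ∀ α, ContDiff ℝ ∞ (g α))
    (hpos : ∀ (q v : Fin m → ℝ), v ≠ 0 → 0 < Gfun m N g q v)
    (A : Fin m → (Fin m → ℝ) → ℝ) (hA : ∀ μ, ContDiff ℝ ∞ (A μ))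
    (c : ℝ → Fin m → ℝ) (hc : ContDiff ℝ 2 c) (hc' : ∀ τ : ℝ, deriv c τ ≠ 0) :
    ∀ τ : ℝ, ∑ lam : Fin m, deriv c τ lam * eulerLagrange (Lrel m N g A) c lam τ = 0 := by
  intro τ
  obtain ⟨hc1, -, hdc⟩ := contDiff_succ_iff_deriv.mp (show ContDiff ℝ (1 + 1) c from hc)
  refine sum_deriv_mul_eulerLagrange_eq_zero (fun s => ?_) (fun q v hv t ht => ?_) hc' (hc1 τ)
    (hdc.differentiable one_ne_zero τ)
  · exact (contDiffAt_uncurry_Lrel hg hA (hpos _ _ (hc' s)).ne').of_le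
      (WithTop.coe_le_coe.mpr le_top)
  · exact Lrel_smul (by omega) (hpos q v hv).le ht.le

/-- For the relativistic Lagrangian
`L(q,v) = G(q,v)^{1/(2N)} + Σ_μ A_μ(q) v^μ`, along every smooth curve with
nowhere-vanishing derivative the Euler–Lagrange expressions satisfy the Noether
identities `Σ_λ c'^λ ℰ_λ = 0`. -/
theorem noether_identities_relativistic_lagrangian
    (m N : ℕ) (hm : 1 ≤ m) (hN : 1 ≤ N)
    (g : (Fin (2 * N) → Fin m) → (Fin m → ℝ) → ℝ)
    (hg : ∀ α, ContDiff ℝ ∞ (g α))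
    (hsym : ∀ (α : Fin (2 * N) → Fin m) (σ : Equiv.Perm (Fin (2 * N))), g (α ∘ σ) = g α)
    (hpos : ∀ (q v : Fin m → ℝ), v ≠ 0 → 0 < Gfun m N g q v)
    (A : Fin m → (Fin m → ℝ) → ℝ) (hA : ∀ μ, ContDiff ℝ ∞ (A μ))
    (c : ℝ → Fin m → ℝ) (hc : ContDiff ℝ 2 c) (hc' : ∀ τ : ℝ, deriv c τ ≠ 0) :
    ∀ τ : ℝ, ∑ lam : Fin m, deriv c τ lam * eulerLagrange (Lrel m N g A) c lam τ = 0 :=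
  noether_identities_relativistic_lagrangian_general m N hN g hg hpos A hA c hc hc'
end

section
/- (Lemma: solutions of the Lagrange equations living on the relativistic constraint solve the relativistic equation.) Let c : ℝ → ℝᵐ be a twice continuously differentiable curve satisfying the Lagrange equations ℰ_λ(c)(τ) = 0 for all λ and all τ, and the relativistic constraint G(c(τ), c'(τ)) = 1 for all τ. Then c satisfies the relativistic equation E_β(c)(τ) = 0 for all β and all τ. -/
open ContDiff

open scoped BigOperators

/-!
On the constraint surface `G = 1` the factor `G ^ (1/(2N) - 1)` produced by differentiating
`G ^ (1/(2N))` equals `1`, so both partial derivatives of `L` become polynomial in the velocity.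
Because `g` is symmetric, differentiating the form `G(q, ·)` in the direction `w` gives
`2N · Σ g_{μ α₂…α_{2N}} w^μ v^{α₂}⋯v^{α_{2N}}`, and the time derivative of the resulting momentum
`Σ g_{β α₂…α_{2N}} v^{α₂}⋯v^{α_{2N}} + A_β` produces, for the same reason, the term
`(2N-1) Σ g_{β μ α₃…} c''^μ c'^{α₃}⋯`. With these, `ℰ_β(c)` and `E_β(c)` agree term by term.
-/

open Finset

section TupCons

variable {κ : Type*} {n : ℕ}

def tupCons (n : ℕ) (μ : κ) (t : Fin (n - 1) → κ) : Fin n → κ :=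
  fun k => if h : (k : ℕ) = 0 then μ else t ⟨(k : ℕ) - 1, by have := k.isLt; omega⟩

def tupSucc (j : Fin (n - 1)) : Fin n := ⟨j + 1, by omega⟩

theorem tupSucc_injective : Function.Injective (tupSucc (n := n)) :=
  fun i j h => Fin.ext (by simpa [tupSucc] using h)

theorem tupSucc_ne_zero (hn : 0 < n) (j : Fin (n - 1)) : tupSucc j ≠ ⟨0, hn⟩ := by
  simp [tupSucc, Fin.ext_iff]

theorem eq_zero_or_eq_tupSucc (hn : 0 < n) (k : Fin n) : k = ⟨0, hn⟩ ∨ ∃ j, k = tupSucc j := by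
  rcases Nat.eq_zero_or_pos k with h | h
  · exact .inl (Fin.ext h)
  · exact .inr ⟨⟨k - 1, by omega⟩, Fin.ext (by simp [tupSucc]; omega)⟩

@[simp] theorem tupCons_zero (hn : 0 < n) (μ : κ) (t : Fin (n - 1) → κ) :
    tupCons n μ t ⟨0, hn⟩ = μ := rfl

@[simp] theorem tupCons_tupSucc (μ : κ) (t : Fin (n - 1) → κ) (j : Fin (n - 1)) :
    tupCons n μ t (tupSucc j) = t j := by
  simp [tupCons, tupSucc]

theorem tupCons_comp_swap [DecidableEq κ] (hn : 0 < n) (μ : κ) (t : Fin (n - 1) → κ)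
    (i j : Fin (n - 1)) :
    tupCons n μ (t ∘ Equiv.swap i j) = tupCons n μ t ∘ Equiv.swap (tupSucc i) (tupSucc j) := by
  funext k
  rcases eq_zero_or_eq_tupSucc hn k with rfl | ⟨l, rfl⟩
  · simp [Equiv.swap_apply_of_ne_of_ne (tupSucc_ne_zero hn i).symm (tupSucc_ne_zero hn j).symm]
  · simp [tupSucc_injective.swap_apply]

def tupConsEquiv (hn : 0 < n) : κ × (Fin (n - 1) → κ) ≃ (Fin n → κ) where
  toFun p := tupCons n p.1 p.2
  invFun α := (α ⟨0, hn⟩, α ∘ tupSucc)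
  left_inv p := by ext <;> simp
  right_inv α := by
    funext k
    rcases eq_zero_or_eq_tupSucc hn k with rfl | ⟨l, rfl⟩ <;> simp

theorem sum_eq_sum_sum_tupCons {M : Type*} [AddCommMonoid M] [Fintype κ] (hn : 0 < n)
    (F : (Fin n → κ) → M) :
    ∑ α, F α = ∑ μ, ∑ t, F (tupCons n μ t) := by
  rw [← Fintype.sum_prod_type']
  exact (Fintype.sum_equiv (tupConsEquiv hn) _ _ fun _ => rfl).symm

theorem prod_erase_zero_eq_prod_tupSucc {M : Type*} [CommMonoid M] (hn : 0 < n)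
    (f : Fin n → M) :
    ∏ k ∈ univ.erase ⟨0, hn⟩, f k = ∏ j, f (tupSucc j) := by
  refine (prod_nbij tupSucc (fun j _ => by simp [tupSucc_ne_zero]) tupSucc_injective.injOn
    (fun k hk => ?_) fun _ _ => rfl).symm
  rcases eq_zero_or_eq_tupSucc hn k with rfl | ⟨l, rfl⟩
  · simp at hk
  · exact ⟨l, by simp⟩

theorem prod_tupCons {M : Type*} [CommMonoid M] (hn : 0 < n) (f : κ → M) (μ : κ)
    (t : Fin (n - 1) → κ) :
    ∏ k, f (tupCons n μ t k) = f μ * ∏ j, f (t j) := by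
  rw [← mul_prod_erase univ _ (mem_univ ⟨0, hn⟩), prod_erase_zero_eq_prod_tupSucc]
  simp

end TupCons

section SymmetricForm

variable {ι κ : Type*} [Fintype ι] [DecidableEq ι] [Fintype κ]

theorem sum_mul_sum_prod_erase_mul_eq_card_mul {R : Type*} [CommSemiring R] {G : (ι → κ) → R}
    (hG : ∀ α i j, G (α ∘ Equiv.swap i j) = G α) (v w : κ → R) (i₀ : ι) :
    ∑ α, G α * ∑ k, (∏ j ∈ univ.erase k, v (α j)) * w (α k)
      = Fintype.card ι * ∑ α, G α * ((∏ j ∈ univ.erase i₀, v (α j)) * w (α i₀)) := by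
  have term_eq (k : ι) : ∑ α, G α * ((∏ j ∈ univ.erase k, v (α j)) * w (α k))
      = ∑ α, G α * ((∏ j ∈ univ.erase i₀, v (α j)) * w (α i₀)) := by
    refine Fintype.sum_equiv (Equiv.arrowCongr (Equiv.swap k i₀) (Equiv.refl κ)) _ _
      fun α => ?_
    have hα : Equiv.arrowCongr (Equiv.swap k i₀) (Equiv.refl κ) α = α ∘ Equiv.swap k i₀ := by
      ext; simp
    have hprod : ∏ j ∈ univ.erase k, v (α j)
        = ∏ j ∈ univ.erase i₀, v (α (Equiv.swap k i₀ j)) :=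
      prod_equiv (Equiv.swap k i₀) (fun j => by simp [Equiv.swap_apply_eq_iff]) fun j _ => by simp
    rw [hα, hG, hprod]
    simp
  calc ∑ α, G α * ∑ k, (∏ j ∈ univ.erase k, v (α j)) * w (α k)
      = ∑ k, ∑ α, G α * ((∏ j ∈ univ.erase k, v (α j)) * w (α k)) := by
        simp_rw [mul_sum]; exact sum_comm
    _ = _ := by simp [term_eq]

theorem sum_mul_sum_prod_erase_mul_eq {R : Type*} [CommSemiring R] {n : ℕ} (hn : 0 < n)
    {G : (Fin n → κ) → R} (hG : ∀ α i j, G (α ∘ Equiv.swap i j) = G α) (v w : κ → R) :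
    ∑ α, G α * ∑ k, (∏ j ∈ univ.erase k, v (α j)) * w (α k)
      = n * ∑ μ, w μ * ∑ t, G (tupCons n μ t) * ∏ j, v (t j) := by
  rw [sum_mul_sum_prod_erase_mul_eq_card_mul hG v w ⟨0, hn⟩, Fintype.card_fin,
    sum_eq_sum_sum_tupCons hn]
  congr 1
  refine sum_congr rfl fun μ _ => ?_
  rw [mul_sum]
  refine sum_congr rfl fun t _ => ?_
  rw [prod_erase_zero_eq_prod_tupSucc, tupCons_zero]
  simp only [tupCons_tupSucc]
  ring

theorem hasFDerivAt_sum_mul_prod (G : (ι → κ) → ℝ) (v : κ → ℝ) :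
    HasFDerivAt (fun v : κ → ℝ => ∑ α, G α * ∏ k, v (α k))
      (∑ α, G α • ∑ k, (∏ j ∈ univ.erase k, v (α j)) •
        (ContinuousLinearMap.proj (α k) : (κ → ℝ) →L[ℝ] ℝ)) v :=
  HasFDerivAt.fun_sum fun α _ =>
    (HasFDerivAt.finsetProd fun k _ => hasFDerivAt_apply (α k) v).const_mul (G α)

theorem HasDerivAt.sum_mul_prod {G : ℝ → (ι → κ) → ℝ} {G' : (ι → κ) → ℝ}
    {u : ℝ → κ → ℝ} {u' : κ → ℝ} {τ : ℝ} (hG : ∀ α, HasDerivAt (fun s => G s α) (G' α) τ)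
    (hu : HasDerivAt u u' τ) :
    HasDerivAt (fun s => ∑ α, G s α * ∏ k, u s (α k))
      (∑ α, (G' α * ∏ k, u τ (α k)
        + G τ α * ∑ k, (∏ j ∈ univ.erase k, u τ (α j)) * u' (α k))) τ := by
  refine HasDerivAt.fun_sum fun α _ => (hG α).mul ?_
  simpa using HasDerivAt.fun_finsetProd fun k _ => hasDerivAt_pi.1 hu (α k)

end SymmetricForm

section Calculus

variable {m : ℕ}

theorem HasFDerivAt.partialDeriv_eq {f : (Fin m → ℝ) → ℝ} {f' : (Fin m → ℝ) →L[ℝ] ℝ}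
    {q : Fin m → ℝ} (h : HasFDerivAt f f' q) (β : Fin m) :
    partialDeriv f β q = f' (Pi.single β 1) := by
  rw [partialDeriv, h.fderiv]

theorem partialDeriv_rpow_add_of_eq_one {f h : (Fin m → ℝ) → ℝ}
    {f' h' : (Fin m → ℝ) →L[ℝ] ℝ} {q : Fin m → ℝ} (hf : HasFDerivAt f f' q)
    (hh : HasFDerivAt h h' q) (hfq : f q = 1) (p : ℝ) (β : Fin m) :
    partialDeriv (fun x => f x ^ p + h x) β q = p * f' (Pi.single β 1) + h' (Pi.single β 1) := by
  rw [((hf.rpow_const (.inl (by simp [hfq]))).fun_add hh).partialDeriv_eq]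
  simp [hfq]

theorem DifferentiableAt.hasDerivAt_comp_curve {f : (Fin m → ℝ) → ℝ} {c : ℝ → Fin m → ℝ}
    {c' : Fin m → ℝ} {τ : ℝ} (hf : DifferentiableAt ℝ f (c τ)) (hc : HasDerivAt c c' τ) :
    HasDerivAt (fun s => f (c s)) (∑ μ, partialDeriv f μ (c τ) * c' μ) τ := by
  refine (hf.hasFDerivAt.comp_hasDerivAt τ hc).congr_deriv ?_
  conv_lhs => rw [pi_eq_sum_univ' c']
  simp [partialDeriv, mul_comm]

theorem hasFDerivAt_sum_mul_const {ι E : Type*} [Fintype ι] [NormedAddCommGroup E]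
    [NormedSpace ℝ E] {f : ι → E → ℝ} {q : E} (hf : ∀ i, DifferentiableAt ℝ (f i) q)
    (b : ι → ℝ) :
    HasFDerivAt (fun x => ∑ i, f i x * b i) (∑ i, b i • fderiv ℝ (f i) q) q :=
  HasFDerivAt.fun_sum fun i _ => (hf i).hasFDerivAt.mul_const (b i)

end Calculus

section Relativistic

variable {m N : ℕ} {g : (Fin (2 * N) → Fin m) → (Fin m → ℝ) → ℝ}
  {A : Fin m → (Fin m → ℝ) → ℝ}

theorem tupCons1_eq_tupCons : tupCons1 m N = tupCons (2 * N) := rfl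

theorem tupCons2_eq_tupCons_tupCons (β μ : Fin m) (s : Fin (2 * N - 2) → Fin m) :
    tupCons2 m N β μ s = tupCons (2 * N) β (tupCons (2 * N - 1) μ s) := by
  funext k
  have hk := Fin.pos k
  rcases eq_zero_or_eq_tupSucc hk k with rfl | ⟨l, rfl⟩
  · rfl
  have hl := Fin.pos l
  rcases eq_zero_or_eq_tupSucc hl l with rfl | ⟨r, rfl⟩
  · rfl
  simp only [tupCons_tupSucc]
  simp [tupCons2, tupSucc]

theorem partialDeriv_fst_Lrel (hN : 0 < N) {q v : Fin m → ℝ}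
    (hg : ∀ α, DifferentiableAt ℝ (g α) q) (hA : ∀ μ, DifferentiableAt ℝ (A μ) q)
    (hqv : Gfun m N g q v = 1) (β : Fin m) :
    partialDeriv (fun q => Lrel m N g A q v) β q
      = 1 / (2 * N) * ∑ μ, v μ * ∑ t, partialDeriv (g (tupCons (2 * N) μ t)) β q * ∏ j, v (t j)
        + ∑ μ, partialDeriv (A μ) β q * v μ := by
  have := partialDeriv_rpow_add_of_eq_one (hasFDerivAt_sum_mul_const hg _)
    (hasFDerivAt_sum_mul_const hA v) hqv (1 / (2 * N)) β
  simp only [_root_.sum_apply, smul_apply, smul_eq_mul] at this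
  unfold Lrel Gfun
  rw [this, sum_eq_sum_sum_tupCons (by omega : 0 < 2 * N)]
  simp only [prod_tupCons (by omega : 0 < 2 * N), partialDeriv]
  congr 1
  · congr 1
    refine sum_congr rfl fun μ _ => ?_
    rw [mul_sum]
    exact sum_congr rfl fun t _ => by ring
  · exact sum_congr rfl fun μ _ => mul_comm _ _

theorem partialDeriv_snd_Lrel (hN : 0 < N) (hsym : ∀ α i j, g (α ∘ Equiv.swap i j) = g α)
    {q v : Fin m → ℝ} (hqv : Gfun m N g q v = 1) (β : Fin m) :
    partialDeriv (fun v => Lrel m N g A q v) β v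
      = ∑ t, g (tupCons (2 * N) β t) q * ∏ j, v (t j) + A β q := by
  have hlin : HasFDerivAt (fun v : Fin m → ℝ => ∑ μ, A μ q * v μ)
      (∑ μ, A μ q • (ContinuousLinearMap.proj μ : (Fin m → ℝ) →L[ℝ] ℝ)) v :=
    HasFDerivAt.fun_sum fun μ _ => (hasFDerivAt_apply μ v).const_mul (A μ q)
  have := partialDeriv_rpow_add_of_eq_one (hasFDerivAt_sum_mul_prod (fun α => g α q) v) hlin
    hqv (1 / (2 * N)) β
  simp only [_root_.sum_apply, smul_apply, smul_eq_mul, ContinuousLinearMap.proj_apply] at this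
  unfold Lrel Gfun
  rw [this, sum_mul_sum_prod_erase_mul_eq (by omega) fun α i j => congrFun (hsym α i j) q]
  simp only [Pi.single_apply, ite_mul, mul_ite, one_mul, zero_mul, mul_one, mul_zero,
    sum_ite_eq', mem_univ, if_true, Nat.cast_mul, Nat.cast_ofNat]
  field_simp

theorem hasDerivAt_momentum (hN : 0 < N) (hsym : ∀ α i j, g (α ∘ Equiv.swap i j) = g α)
    {c u : ℝ → Fin m → ℝ} {c' u' : Fin m → ℝ} {τ : ℝ}
    (hg : ∀ α, DifferentiableAt ℝ (g α) (c τ)) (hA : ∀ μ, DifferentiableAt ℝ (A μ) (c τ))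
    (hc : HasDerivAt c c' τ) (hu : HasDerivAt u u' τ) (β : Fin m) :
    HasDerivAt (fun s => ∑ t, g (tupCons (2 * N) β t) (c s) * ∏ j, u s (t j) + A β (c s))
      (∑ μ, c' μ * ∑ t, partialDeriv (g (tupCons (2 * N) β t)) μ (c τ) * ∏ j, u τ (t j)
        + (2 * N - 1) * ∑ μ, u' μ * ∑ s : Fin (2 * N - 2) → Fin m,
            g (tupCons (2 * N) β (tupCons (2 * N - 1) μ s)) (c τ) * ∏ j, u τ (s j)
        + ∑ μ, partialDeriv (A β) μ (c τ) * c' μ) τ := by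
  have hsymT (t : Fin (2 * N - 1) → Fin m) (i j) :
      g (tupCons (2 * N) β (t ∘ Equiv.swap i j)) (c τ) = g (tupCons (2 * N) β t) (c τ) := by
    rw [tupCons_comp_swap (by omega), hsym]
  refine ((HasDerivAt.sum_mul_prod (fun t => (hg _).hasDerivAt_comp_curve hc) hu).add
    ((hA β).hasDerivAt_comp_curve hc)).congr_deriv ?_
  rw [sum_add_distrib, sum_mul_sum_prod_erase_mul_eq (by omega) hsymT,
    Nat.cast_sub (by omega), Nat.cast_mul, Nat.cast_ofNat, Nat.cast_one]
  congr 2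
  simp only [sum_mul, mul_sum]
  rw [sum_comm]
  exact sum_congr rfl fun μ _ => sum_congr rfl fun t _ => by ring

end Relativistic

theorem lagrange_on_constraint_solves_relativistic_equation_general
    (m N : ℕ) (hN : 1 ≤ N)
    (g : (Fin (2 * N) → Fin m) → (Fin m → ℝ) → ℝ)
    (hg : ∀ α, ContDiff ℝ ∞ (g α))
    (hsym : ∀ (α : Fin (2 * N) → Fin m) (σ : Equiv.Perm (Fin (2 * N))), g (α ∘ σ) = g α)
    (A : Fin m → (Fin m → ℝ) → ℝ) (hA : ∀ μ, ContDiff ℝ ∞ (A μ))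
    (c : ℝ → Fin m → ℝ) (hc : ContDiff ℝ 2 c)
    (hEL : ∀ (lam : Fin m) (τ : ℝ), eulerLagrange (Lrel m N g A) c lam τ = 0)
    (hconstr : ∀ τ : ℝ, Gfun m N g (c τ) (deriv c τ) = 1) :
    ∀ (β : Fin m) (τ : ℝ), Erel m N g A c β τ = 0 := by
  intro β τ
  have hswap (α : Fin (2 * N) → Fin m) (i j) := hsym α (Equiv.swap i j)
  have hgd (α) (q) : DifferentiableAt ℝ (g α) q := (hg α).differentiable (by simp) q
  have hAd (μ) (q) : DifferentiableAt ℝ (A μ) q := (hA μ).differentiable (by simp) q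
  obtain ⟨hc₁, -, hc₂⟩ := contDiff_succ_iff_deriv.mp (show ContDiff ℝ (1 + 1) c from hc)
  have hmom := hasDerivAt_momentum hN hswap (hgd · _) (hAd · _) (hc₁ τ).hasDerivAt
    ((hc₂.differentiable one_ne_zero) τ).hasDerivAt β
  have hEL := hEL β τ
  simp only [eulerLagrange, partialDeriv_fst_Lrel hN (hgd · _) (hAd · _) (hconstr τ),
    fun s => partialDeriv_snd_Lrel (A := A) hN hswap (hconstr s) β, hmom.deriv] at hEL
  simp only [Erel, Fstr, hconstr τ, Real.one_rpow, one_mul, tupCons1_eq_tupCons,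
    tupCons2_eq_tupCons_tupCons]
  simp only [mul_sum, sub_mul, sum_sub_distrib, mul_comm, mul_left_comm, mul_assoc] at hEL ⊢
  linear_combination hEL

/-- Lemma: any C² solution of the Lagrange equations `ℰ_λ = 0` living on
the relativistic constraint surface `G(c,c') = 1` is a solution of the relativistic
equation `E_β = 0`. -/
theorem lagrange_on_constraint_solves_relativistic_equation
    (m N : ℕ) (hm : 1 ≤ m) (hN : 1 ≤ N)
    (g : (Fin (2 * N) → Fin m) → (Fin m → ℝ) → ℝ)
    (hg : ∀ α, ContDiff ℝ ∞ (g α))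
    (hsym : ∀ (α : Fin (2 * N) → Fin m) (σ : Equiv.Perm (Fin (2 * N))), g (α ∘ σ) = g α)
    (hpos : ∀ (q v : Fin m → ℝ), v ≠ 0 → 0 < Gfun m N g q v)
    (A : Fin m → (Fin m → ℝ) → ℝ) (hA : ∀ μ, ContDiff ℝ ∞ (A μ))
    (c : ℝ → Fin m → ℝ) (hc : ContDiff ℝ 2 c)
    (hEL : ∀ (lam : Fin m) (τ : ℝ), eulerLagrange (Lrel m N g A) c lam τ = 0)
    (hconstr : ∀ τ : ℝ, Gfun m N g (c τ) (deriv c τ) = 1) :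
    ∀ (β : Fin m) (τ : ℝ), Erel m N g A c β τ = 0 :=
  lagrange_on_constraint_solves_relativistic_equation_general m N hN g hg hsym A hA c hc hEL hconstr
end

section
/- (Lemma: solutions of the relativistic equation do not leave the constraint surface.) Let c : ℝ → ℝᵐ be a twice continuously differentiable curve with nowhere-vanishing derivative satisfying E_β(c)(τ) = 0 for all β and all τ. If G(c(τ₀), c'(τ₀)) = 1 for some τ₀ ∈ ℝ, then G(c(τ), c'(τ)) = 1 for all τ ∈ ℝ. -/
open ContDiff

open scoped BigOperators

/-!
Along a curve, `d/dτ G(c, c') = ∂_q G · c' + ∂_v G · c''`. Contracting `E_β` with `c'^β` kills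
the field term, since `F` is antisymmetric, and, by the symmetry of `g`, turns the two remaining
terms into `(1/(2N) - 1) ∂_q G · c' - ((2N - 1)/(2N)) ∂_v G · c''`, which is `(1 - 2N)/(2N)`
times `d/dτ G(c, c')`. Hence `E = 0` forces `G(c, c')` to be constant.
-/

section ConsCast

variable {ι : Type*} {M n : ℕ}

/-- `Fin.cons` for a length `M` that is only propositionally a successor, such as `2 * N`. -/
def consCast (h : M = n + 1) (i : ι) (t : Fin n → ι) : Fin M → ι :=
  Fin.cons i t ∘ Fin.cast h

lemma consCast_apply (h : M = n + 1) (i : ι) (t : Fin n → ι) (k : Fin M) :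
    consCast h i t k = if hk : (k : ℕ) = 0 then i else t ⟨k - 1, by have := k.isLt; omega⟩ := by
  subst h
  cases k using Fin.cases <;> simp [consCast]

lemma consCast_cast_zero (h : M = n + 1) (i : ι) (t : Fin n → ι) :
    consCast h i t (Fin.cast h.symm 0) = i := by
  simp [consCast]

lemma sum_consCast [Fintype ι] {R : Type*} [AddCommMonoid R] (h : M = n + 1)
    (f : (Fin M → ι) → R) : ∑ α, f α = ∑ i, ∑ t : Fin n → ι, f (consCast h i t) := by
  subst h
  rw [← (Fin.consEquiv fun _ => ι).sum_comp, Fintype.sum_prod_type]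
  rfl

lemma prod_consCast {R : Type*} [CommMonoid R] (h : M = n + 1) (F : ι → R) (i : ι)
    (t : Fin n → ι) : ∏ k, F (consCast h i t k) = F i * ∏ j, F (t j) := by
  subst h
  simp [consCast, Fin.prod_univ_succ]

lemma prod_erase_consCast {R : Type*} [CommMonoid R] (h : M = n + 1) (F : ι → R) (i : ι)
    (t : Fin n → ι) :
    ∏ k ∈ Finset.univ.erase (Fin.cast h.symm 0), F (consCast h i t k) = ∏ j, F (t j) := by
  subst h
  rw [Fin.cast_refl, id, Fin.univ_succ, Finset.erase_cons, Finset.prod_map]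
  simp [consCast]

end ConsCast

lemma tupCons1_eq_consCast {m N : ℕ} (h : 2 * N = (2 * N - 1) + 1) (μ : Fin m)
    (t : Fin (2 * N - 1) → Fin m) : tupCons1 m N μ t = consCast h μ t := by
  funext k
  rw [consCast_apply, tupCons1]

lemma tupCons2_eq_tupCons1_consCast {m N : ℕ} (h : 2 * N - 1 = (2 * N - 2) + 1) (β μ : Fin m)
    (s : Fin (2 * N - 2) → Fin m) : tupCons2 m N β μ s = tupCons1 m N β (consCast h μ s) := by
  funext k
  simp only [tupCons1, tupCons2, consCast_apply]
  split_ifs <;> first | rfl | omega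

lemma tupCons2_comp_swap {m N : ℕ} (hN : 1 ≤ N) (β μ : Fin m) (s : Fin (2 * N - 2) → Fin m) :
    tupCons2 m N β μ s ∘ Equiv.swap ⟨0, by omega⟩ ⟨1, by omega⟩ = tupCons2 m N μ β s := by
  funext k
  rcases k with ⟨_ | _ | k, hk⟩ <;> simp [tupCons2, Equiv.swap_apply_def]

section PermInvariant

variable {ι R : Type*} [Fintype ι] [CommSemiring R] {M : ℕ} {G : (Fin M → ι) → R}

lemma sum_mul_prod_erase_mul_eq (hG : ∀ α (σ : Equiv.Perm (Fin M)), G (α ∘ σ) = G α)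
    (F H : ι → R) (j z : Fin M) :
    ∑ α, G α * ((∏ k ∈ Finset.univ.erase j, F (α k)) * H (α j))
      = ∑ α, G α * ((∏ k ∈ Finset.univ.erase z, F (α k)) * H (α z)) := by
  rw [← (Equiv.arrowCongr (Equiv.swap j z) (Equiv.refl ι)).sum_comp]
  refine Finset.sum_congr rfl fun α _ => ?_
  have hα : Equiv.arrowCongr (Equiv.swap j z) (Equiv.refl ι) α = α ∘ Equiv.swap j z := by
    funext k; simp [Equiv.arrowCongr_apply]
  have hprod : ∏ k ∈ Finset.univ.erase j, F (α (Equiv.swap j z k))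
      = ∏ k ∈ Finset.univ.erase z, F (α k) :=
    Finset.prod_nbij' (Equiv.swap j z) (Equiv.swap j z) (by simp [Equiv.swap_apply_eq_iff])
      (by simp [Equiv.swap_apply_eq_iff]) (by simp) (by simp) (by simp)
  simp only [hα, hG, Function.comp_apply, hprod, Equiv.swap_apply_left]

lemma sum_mul_sum_prod_erase_mul (hG : ∀ α (σ : Equiv.Perm (Fin M)), G (α ∘ σ) = G α)
    (F H : ι → R) (z : Fin M) :
    ∑ α, G α * ∑ j, (∏ k ∈ Finset.univ.erase j, F (α k)) * H (α j)
      = M * ∑ α, G α * ((∏ k ∈ Finset.univ.erase z, F (α k)) * H (α z)) := by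
  simp_rw [Finset.mul_sum]
  rw [Finset.sum_comm, Finset.sum_congr rfl fun j _ => sum_mul_prod_erase_mul_eq hG F H j z,
    Finset.sum_const, Finset.card_univ, Fintype.card_fin, nsmul_eq_mul, Finset.mul_sum]

end PermInvariant

lemma sum_mul_sum_mul_sub_swap {ι R : Type*} [Fintype ι] [CommRing R] (D : ι → ι → R)
    (v : ι → R) (c : R) :
    ∑ β, v β * ∑ μ, (c * D β μ - D μ β) * v μ = (c - 1) * ∑ β, v β * ∑ μ, D β μ * v μ := by
  have hswap : ∑ β, ∑ μ, v β * (D μ β * v μ) = ∑ β, ∑ μ, v β * (D β μ * v μ) := by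
    rw [Finset.sum_comm]
    exact Finset.sum_congr rfl fun β _ => Finset.sum_congr rfl fun μ _ => by ring
  simp only [Finset.mul_sum, sub_mul, one_mul, mul_sub, Finset.sum_sub_distrib, hswap]
  congr 1
  exact Finset.sum_congr rfl fun β _ => Finset.sum_congr rfl fun μ _ => by ring

lemma sum_mul_sum_Fstr_mul_eq_zero {m : ℕ} (A : Fin m → (Fin m → ℝ) → ℝ) (q v : Fin m → ℝ) :
    ∑ β, v β * ∑ μ, Fstr A β μ q * v μ = 0 := by
  simpa [Fstr] using sum_mul_sum_mul_sub_swap (fun β μ => partialDeriv (A μ) β q) v 1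

lemma fderiv_apply_eq_sum_partialDeriv {m : ℕ} (f : (Fin m → ℝ) → ℝ) (q v : Fin m → ℝ) :
    fderiv ℝ f q v = ∑ β, v β * partialDeriv f β q := by
  conv_lhs => rw [← Finset.univ_sum_single v]
  rw [map_sum]
  refine Finset.sum_congr rfl fun β _ => ?_
  rw [partialDeriv, ← smul_eq_mul, ← map_smul, ← Pi.single_smul', smul_eq_mul, mul_one]

noncomputable def qDerivGfun (m N : ℕ) (g : (Fin (2 * N) → Fin m) → (Fin m → ℝ) → ℝ)
    (q v : Fin m → ℝ) : ℝ :=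
  ∑ α, (∑ β, v β * partialDeriv (g α) β q) * ∏ k, v (α k)

/-- `polarGfun m N g q v a = g_{μα₂…α_{2N}}(q) a^μ v^{α₂}⋯v^{α_{2N}}`, which is `1/(2N)` times
the derivative of `G(q, ·)` at `v` in the direction `a`. -/
noncomputable def polarGfun (m N : ℕ) (g : (Fin (2 * N) → Fin m) → (Fin m → ℝ) → ℝ)
    (q v a : Fin m → ℝ) : ℝ :=
  ∑ μ, ∑ t : Fin (2 * N - 1) → Fin m, g (tupCons1 m N μ t) q * a μ * ∏ k, v (t k)

lemma hasDerivAt_Gfun_comp {m N : ℕ} {g : (Fin (2 * N) → Fin m) → (Fin m → ℝ) → ℝ}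
    (hg : ∀ α, Differentiable ℝ (g α)) {γ w : ℝ → Fin m → ℝ} {a : Fin m → ℝ} {τ : ℝ}
    (hγ : HasDerivAt γ (w τ) τ) (hw : HasDerivAt w a τ) :
    HasDerivAt (fun s => Gfun m N g (γ s) (w s))
      (qDerivGfun m N g (γ τ) (w τ)
        + ∑ α, g α (γ τ) * ∑ j, (∏ k ∈ Finset.univ.erase j, w τ (α k)) * a (α j)) τ := by
  rw [qDerivGfun, ← Finset.sum_add_distrib]
  refine HasDerivAt.fun_sum fun α _ => ?_
  have hgα : HasDerivAt (fun s => g α (γ s)) (∑ β, w τ β * partialDeriv (g α) β (γ τ)) τ := by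
    rw [← fderiv_apply_eq_sum_partialDeriv]
    exact (hg α (γ τ)).hasFDerivAt.comp_hasDerivAt τ hγ
  have hprod : HasDerivAt (fun s => ∏ k, w s (α k))
      (∑ j, (∏ k ∈ Finset.univ.erase j, w τ (α k)) * a (α j)) τ := by
    simpa [mul_comm] using
      HasDerivAt.fun_finsetProd (u := Finset.univ) fun k _ => hasDerivAt_pi.1 hw (α k)
  exact hgα.mul hprod

section SymmetricCoefficients

variable {m N : ℕ} {g : (Fin (2 * N) → Fin m) → (Fin m → ℝ) → ℝ}

lemma sum_mul_sum_prod_erase_mul_eq_polarGfun (hN : 1 ≤ N)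
    (hsym : ∀ (α : Fin (2 * N) → Fin m) (σ : Equiv.Perm (Fin (2 * N))), g (α ∘ σ) = g α)
    (q v a : Fin m → ℝ) :
    ∑ α, g α q * ∑ j, (∏ k ∈ Finset.univ.erase j, v (α k)) * a (α j)
      = 2 * N * polarGfun m N g q v a := by
  have h : 2 * N = (2 * N - 1) + 1 := by omega
  rw [sum_mul_sum_prod_erase_mul (fun α σ => congrFun (hsym α σ) q) v a (Fin.cast h.symm 0),
    sum_consCast h, polarGfun]
  push_cast
  congr 1
  refine Finset.sum_congr rfl fun μ _ => Finset.sum_congr rfl fun t _ => ?_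
  rw [prod_erase_consCast, consCast_cast_zero, ← tupCons1_eq_consCast]
  ring

lemma qDerivGfun_eq_sum_tupCons1 (hN : 1 ≤ N) (q v : Fin m → ℝ) :
    qDerivGfun m N g q v = ∑ β, v β * ∑ μ,
      (∑ t, partialDeriv (g (tupCons1 m N μ t)) β q * ∏ k, v (t k)) * v μ := by
  have h : 2 * N = (2 * N - 1) + 1 := by omega
  rw [qDerivGfun, sum_consCast h]
  simp only [prod_consCast h]
  simp only [← tupCons1_eq_consCast h, Finset.sum_mul, Finset.mul_sum]
  conv_rhs => rw [Finset.sum_comm]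
  refine Finset.sum_congr rfl fun μ _ => ?_
  rw [Finset.sum_comm]
  exact Finset.sum_congr rfl fun t _ => Finset.sum_congr rfl fun β _ => by ring

lemma sum_mul_sum_tupCons2_eq_polarGfun (hN : 1 ≤ N)
    (hsym : ∀ (α : Fin (2 * N) → Fin m) (σ : Equiv.Perm (Fin (2 * N))), g (α ∘ σ) = g α)
    (q v a : Fin m → ℝ) :
    ∑ β, v β * ∑ μ, ∑ s, g (tupCons2 m N β μ s) q * a μ * ∏ k, v (s k)
      = polarGfun m N g q v a := by
  have h : 2 * N - 1 = (2 * N - 2) + 1 := by omega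
  have hswap : ∀ β μ s, g (tupCons2 m N β μ s) = g (tupCons2 m N μ β s) := fun β μ s => by
    rw [← tupCons2_comp_swap hN, hsym]
  rw [polarGfun, Finset.sum_congr rfl fun μ _ => sum_consCast h _]
  simp only [prod_consCast h]
  simp only [← tupCons2_eq_tupCons1_consCast h, Finset.mul_sum]
  rw [Finset.sum_comm]
  refine Finset.sum_congr rfl fun μ _ => Finset.sum_congr rfl fun β _ =>
    Finset.sum_congr rfl fun s _ => ?_
  rw [hswap]
  ring

lemma sum_mul_Erel (hN : 1 ≤ N)
    (hsym : ∀ (α : Fin (2 * N) → Fin m) (σ : Equiv.Perm (Fin (2 * N))), g (α ∘ σ) = g α)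
    (A : Fin m → (Fin m → ℝ) → ℝ) (c : ℝ → Fin m → ℝ) (τ : ℝ) :
    ∑ β, deriv c τ β * Erel m N g A c β τ
      = (1 / (2 * N) - 1) * qDerivGfun m N g (c τ) (deriv c τ)
        - (2 * N - 1) * polarGfun m N g (c τ) (deriv c τ) (deriv (deriv c) τ) := by
  set q := c τ
  set v := deriv c τ
  set a := deriv (deriv c) τ
  have hposition : ∑ β, v β * ∑ μ, ∑ t : Fin (2 * N - 1) → Fin m,
      ((1 / (2 * N : ℝ)) * partialDeriv (g (tupCons1 m N μ t)) β q
        - partialDeriv (g (tupCons1 m N β t)) μ q) * v μ * ∏ k, v (t k)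
      = (1 / (2 * N) - 1) * qDerivGfun m N g q v := by
    rw [qDerivGfun_eq_sum_tupCons1 hN, ← sum_mul_sum_mul_sub_swap]
    refine Finset.sum_congr rfl fun β _ => congrArg (v β * ·) (Finset.sum_congr rfl fun μ _ => ?_)
    rw [Finset.mul_sum, ← Finset.sum_sub_distrib, Finset.sum_mul]
    exact Finset.sum_congr rfl fun t _ => by ring
  have hvel : ∑ β, v β * ((2 * N - 1 : ℝ) * ∑ μ, ∑ s : Fin (2 * N - 2) → Fin m,
      g (tupCons2 m N β μ s) q * a μ * ∏ k, v (s k))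
      = (2 * N - 1) * polarGfun m N g q v a := by
    rw [← sum_mul_sum_tupCons2_eq_polarGfun hN hsym, Finset.mul_sum]
    exact Finset.sum_congr rfl fun β _ => by ring
  have hfield : ∑ β, v β * (Gfun m N g q v ^ (1 - 1 / (2 * N : ℝ)) * ∑ μ, Fstr A β μ q * v μ)
      = 0 := by
    simp only [mul_left_comm (v _), ← Finset.mul_sum, sum_mul_sum_Fstr_mul_eq_zero, mul_zero]
  simp only [Erel, mul_add, mul_sub, Finset.sum_add_distrib, Finset.sum_sub_distrib]
  rw [hposition, hvel, hfield, add_zero]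

lemma qDerivGfun_add_polarGfun_eq_zero (hN : 1 ≤ N)
    (hsym : ∀ (α : Fin (2 * N) → Fin m) (σ : Equiv.Perm (Fin (2 * N))), g (α ∘ σ) = g α)
    (A : Fin m → (Fin m → ℝ) → ℝ) (c : ℝ → Fin m → ℝ) (τ : ℝ)
    (hE : ∀ β, Erel m N g A c β τ = 0) :
    qDerivGfun m N g (c τ) (deriv c τ)
      + 2 * N * polarGfun m N g (c τ) (deriv c τ) (deriv (deriv c) τ) = 0 := by
  have hcontr := sum_mul_Erel hN hsym A c τ
  simp only [hE, mul_zero, Finset.sum_const_zero] at hcontr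
  have h2N : (2 * N - 1 : ℝ) ≠ 0 := by
    have : (1 : ℝ) ≤ N := by exact_mod_cast hN
    linarith
  have hinv : 1 / (2 * N : ℝ) * (2 * N) = 1 := by field_simp
  refine (mul_eq_zero.1 ?_).resolve_left h2N
  linear_combination (2 * N : ℝ) * hcontr + qDerivGfun m N g (c τ) (deriv c τ) * hinv

end SymmetricCoefficients

theorem relativistic_equation_preserves_constraint_general
    (m N : ℕ) (hN : 1 ≤ N)
    (g : (Fin (2 * N) → Fin m) → (Fin m → ℝ) → ℝ)
    (hg : ∀ α, ContDiff ℝ ∞ (g α))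
    (hsym : ∀ (α : Fin (2 * N) → Fin m) (σ : Equiv.Perm (Fin (2 * N))), g (α ∘ σ) = g α)
    (A : Fin m → (Fin m → ℝ) → ℝ)
    (c : ℝ → Fin m → ℝ) (hc : ContDiff ℝ 2 c)
    (hE : ∀ (β : Fin m) (τ : ℝ), Erel m N g A c β τ = 0)
    (τ₀ : ℝ) (hτ₀ : Gfun m N g (c τ₀) (deriv c τ₀) = 1) :
    ∀ τ : ℝ, Gfun m N g (c τ) (deriv c τ) = 1 := by
  have hderiv : ∀ τ, HasDerivAt (fun τ => Gfun m N g (c τ) (deriv c τ)) 0 τ := fun τ => by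
    have hG := hasDerivAt_Gfun_comp (fun α => (hg α).differentiable (by simp))
      (hc.differentiable two_ne_zero τ).hasDerivAt (hc.differentiable_deriv_two τ).hasDerivAt
    rwa [sum_mul_sum_prod_erase_mul_eq_polarGfun hN hsym,
      qDerivGfun_add_polarGfun_eq_zero hN hsym A c τ (hE · τ)] at hG
  intro τ
  rw [← hτ₀]
  exact is_const_of_deriv_eq_zero (fun τ => (hderiv τ).differentiableAt)
    (fun τ => (hderiv τ).deriv) τ τ₀

/-- Lemma: solutions of the relativistic equation `E_β = 0` do not leave
the constraint surface `W_G = {G = 1}`: if `G(c(τ₀), c'(τ₀)) = 1` for some `τ₀`, then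
`G(c(τ), c'(τ)) = 1` for all `τ`. -/
theorem relativistic_equation_preserves_constraint
    (m N : ℕ) (hm : 1 ≤ m) (hN : 1 ≤ N)
    (g : (Fin (2 * N) → Fin m) → (Fin m → ℝ) → ℝ)
    (hg : ∀ α, ContDiff ℝ ∞ (g α))
    (hsym : ∀ (α : Fin (2 * N) → Fin m) (σ : Equiv.Perm (Fin (2 * N))), g (α ∘ σ) = g α)
    (hpos : ∀ (q v : Fin m → ℝ), v ≠ 0 → 0 < Gfun m N g q v)
    (A : Fin m → (Fin m → ℝ) → ℝ) (hA : ∀ μ, ContDiff ℝ ∞ (A μ))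
    (c : ℝ → Fin m → ℝ) (hc : ContDiff ℝ 2 c) (hc' : ∀ τ : ℝ, deriv c τ ≠ 0)
    (hE : ∀ (β : Fin m) (τ : ℝ), Erel m N g A c β τ = 0)
    (τ₀ : ℝ) (hτ₀ : Gfun m N g (c τ₀) (deriv c τ₀) = 1) :
    ∀ τ : ℝ, Gfun m N g (c τ) (deriv c τ) = 1 :=
  relativistic_equation_preserves_constraint_general m N hN g hg hsym A c hc hE τ₀ hτ₀
end
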